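/- The linear transformation on real polynomials defined by sending x^n to the n-th Laguerre polynomial L_n(x) preserves real-rootedness: if p has all real roots, then its image has all real roots. -/

import Mathlib

open Polynomial

/-- A real polynomial has all real roots: every complex root is real. -/
def AllRealRoots (p : ℝ[X]) : Prop :=
  ∀ z : ℂ, (p.map (algebraMap ℝ ℂ)).IsRoot z → z.im = 0

/-- The map sending x^k to x^k/k!. -/
noncomputable def Tfac (p : ℝ[X]) : ℝ[X] :=
  ∑ k ∈ Finset.range (p.natDegree + 1),
    Polynomial.C (p.coeff k / (Nat.factorial k)) * Polynomial.X ^ k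

/-- The n-th Laguerre polynomial (explicit formula). -/
noncomputable def laguerre (n : ℕ) : ℝ[X] :=
  ∑ k ∈ Finset.range (n + 1),
    Polynomial.C ((-1 : ℝ) ^ k * (n.choose k) / (Nat.factorial k)) * Polynomial.X ^ k

/-- The linear transformation sending x^n to the n-th Laguerre polynomial. -/
noncomputable def Phi (p : ℝ[X]) : ℝ[X] :=
  ∑ n ∈ Finset.range (p.natDegree + 1), Polynomial.C (p.coeff n) * laguerre n

/-!
`Phi p = Tfac (p.comp (1 - X))`, since the coefficient of `x ^ j` in `L_m` is that of `(1 - x) ^ m`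
divided by `j !`. The substitution `x ↦ 1 - x` preserves real-rootedness. For `Tfac`, let `q`
have degree `n` and roots `r_i`: then `n ! • Tfac q = q.reverse (D) (x ^ n)` with
`q.reverse = lc q • ∏ (1 - r_i X)`, and each operator `1 - r D` with `r` real preserves
real-rootedness: at a non-real zero `z` of `f - r f'` we would have
`f'(z) / f(z) = ∑ 1 / (z - s_k) = 1 / r` over the roots `s_k` of `f`, but the imaginary part of the
sum has the sign of `-Im z`.
-/

open scoped Nat

def IsRealRooted (f : ℂ[X]) : Prop :=
  ∀ z : ℂ, f.IsRoot z → z.im = 0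

namespace IsRealRooted

variable {f : ℂ[X]}

theorem ne_zero (hf : IsRealRooted f) : f ≠ 0 := by
  rintro rfl
  simpa using hf Complex.I (by simp)

theorem smul (hf : IsRealRooted f) {c : ℂ} (hc : c ≠ 0) : IsRealRooted (c • f) := fun z hz =>
  hf z ((smul_eq_zero.mp (by simpa using hz)).resolve_left hc)

end IsRealRooted

theorem isRealRooted_X_pow (n : ℕ) : IsRealRooted (X ^ n) := by
  intro z hz
  simp_all

theorem im_sum_one_div_sub_ne_zero {s : Multiset ℂ} (hs0 : s ≠ 0) (hs : ∀ r ∈ s, r.im = 0)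
    {z : ℂ} (hz : z.im ≠ 0) : (s.map fun r => 1 / (z - r)).sum.im ≠ 0 := by
  have hterm : ∀ r ∈ s, z.im * (1 / (z - r)).im < 0 := by
    intro r hr
    have hzr : z - r ≠ 0 := fun h => hz (by simpa [hs r hr] using congrArg Complex.im h)
    rw [one_div, Complex.inv_im, Complex.sub_im, hs r hr, sub_zero, ← mul_div_assoc]
    exact div_neg_of_neg_of_pos (by nlinarith [mul_self_pos.mpr hz]) (Complex.normSq_pos.mpr hzr)
  have hneg := Multiset.sum_lt_sum_of_nonempty (by simpa using hs0) hterm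
  rw [Multiset.sum_map_mul_left, Multiset.map_const', Multiset.sum_replicate, smul_zero] at hneg
  have him : (s.map fun r => 1 / (z - r)).sum.im = (s.map fun r => (1 / (z - r)).im).sum := by
    simpa [Multiset.map_map] using
      map_multiset_sum Complex.imAddGroupHom (s.map fun r => 1 / (z - r))
  intro h
  rw [him] at h
  rw [h, mul_zero] at hneg
  exact lt_irrefl 0 hneg

theorem IsRealRooted.sub_C_mul_derivative {f : ℂ[X]} (hf : IsRealRooted f) {c : ℂ}
    (hc : c.im = 0) : IsRealRooted (f - C c * derivative f) := by
  intro z hz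
  by_contra hzim
  have hfz : f.eval z ≠ 0 := fun h => hzim (hf z h)
  have hfz' : f.eval z = c * (derivative f).eval z := by simpa [sub_eq_zero] using hz
  have hc0 : c ≠ 0 := by rintro rfl; simp_all
  have hdz : (derivative f).eval z ≠ 0 := by rintro h; simp_all
  have hlog : (derivative f).eval z / f.eval z = c⁻¹ := by
    rw [hfz', div_mul_cancel_right₀ hdz]
  have hsum := (IsAlgClosed.splits f).eval_derivative_div_eval_of_ne_zero hfz
  have hroots : f.roots ≠ 0 := by
    intro h
    rw [h] at hsum
    simp [hlog, hc0] at hsum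
  apply im_sum_one_div_sub_ne_zero hroots (fun r hr => hf r (isRoot_of_mem_roots hr)) hzim
  rw [← hsum, hlog, Complex.inv_im, hc, neg_zero, zero_div]

theorem reverse_X_sub_C {R : Type*} [Ring R] [Nontrivial R] (r : R) :
    reverse (X - C r) = 1 - C r * X := by
  have hX : reverse (X : R[X]) = 1 := by rw [← mul_one X, reverse_X_mul, ← C_1, reverse_C]
  rw [sub_eq_add_neg, ← C_neg, reverse_add_C, hX, natDegree_X, pow_one, C_neg, neg_mul,
    sub_eq_add_neg]

theorem Polynomial.Splits.reverse_eq_C_mul_prod {K : Type*} [Field K] {g : K[X]} (hg : g.Splits) :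
    g.reverse = C g.leadingCoeff * (g.roots.map fun r => 1 - C r * X).prod := by
  conv_lhs => rw [hg.eq_prod_roots]
  rw [reverse_mul_of_domain, reverse_C]
  congr 1
  induction g.roots using Multiset.induction_on with
  | empty => simpa using reverse_C (1 : K)
  | cons a s ih =>
    rw [Multiset.map_cons, Multiset.prod_cons, reverse_mul_of_domain, ih, reverse_X_sub_C,
      Multiset.map_cons, Multiset.prod_cons]

local notation "𝒟" => (derivative : Module.End ℂ ℂ[X])

theorem aeval_derivative_one_sub_C_mul_X (r : ℂ) (f : ℂ[X]) :
    aeval 𝒟 (1 - C r * X) f = f - C r * derivative f := by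
  simp [smul_eq_C_mul]

theorem IsRealRooted.aeval_derivative_prod {f : ℂ[X]} (hf : IsRealRooted f) {s : Multiset ℂ}
    (hs : ∀ r ∈ s, r.im = 0) : IsRealRooted (aeval 𝒟 (s.map fun r => 1 - C r * X).prod f) := by
  induction s using Multiset.induction_on with
  | empty => simpa using hf
  | cons r s ih =>
    rw [Multiset.map_cons, Multiset.prod_cons, map_mul, Module.End.mul_apply,
      aeval_derivative_one_sub_C_mul_X]
    exact (ih fun x hx => hs x (Multiset.mem_cons_of_mem hx)).sub_C_mul_derivative
      (hs r (Multiset.mem_cons_self r s))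

theorem IsRealRooted.aeval_derivative_reverse {f g : ℂ[X]} (hf : IsRealRooted f)
    (hg : IsRealRooted g) : IsRealRooted (aeval 𝒟 g.reverse f) := by
  rw [(IsAlgClosed.splits g).reverse_eq_C_mul_prod, map_mul, aeval_C, Module.End.mul_apply,
    Module.algebraMap_end_apply]
  exact (hf.aeval_derivative_prod fun r hr => hg r (isRoot_of_mem_roots hr)).smul
    (leadingCoeff_ne_zero.mpr hg.ne_zero)

theorem coeff_aeval_derivative_reverse_X_pow (g : ℂ[X]) (j : ℕ) :
    (aeval 𝒟 g.reverse (X ^ g.natDegree)).coeff j = g.natDegree ! * (g.coeff j / j !) := by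
  set n := g.natDegree with hn
  have hterm : ∀ i ∈ Finset.range (n + 1),
      (g.reverse.coeff (n - i) • (𝒟 ^ (n - i)) (X ^ n)).coeff j
        = if j = i then g.coeff i * n.descFactorial (n - i) else 0 := by
    intro i hi
    have hin : i ≤ n := Finset.mem_range_succ_iff.mp hi
    rw [Module.End.pow_apply, iterate_derivative_X_pow_eq_C_mul, coeff_smul, coeff_C_mul,
      coeff_X_pow, coeff_reverse, ← hn, revAt_le (Nat.sub_le n i), Nat.sub_sub_self hin]
    split_ifs <;> simp [mul_comm]
  rw [aeval_eq_sum_range' (Nat.lt_succ_of_le (reverse_natDegree_le g)), LinearMap.sum_apply,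
    finsetSum_coeff, ← Finset.sum_range_reflect]
  simp only [Nat.succ_sub_one, ← hn, LinearMap.smul_apply]
  rw [Finset.sum_congr rfl hterm, Finset.sum_ite_eq]
  split_ifs with hj
  all_goals rw [Finset.mem_range_succ_iff] at hj
  · rw [← Nat.factorial_mul_descFactorial (Nat.sub_le n j), Nat.sub_sub_self hj]
    have : (j ! : ℂ) ≠ 0 := Nat.cast_ne_zero.mpr (Nat.factorial_ne_zero j)
    push_cast
    field_simp
  · rw [coeff_eq_zero_of_natDegree_lt (not_le.mp hj)]
    simp

theorem coeff_Tfac (p : ℝ[X]) (j : ℕ) : (Tfac p).coeff j = p.coeff j / j ! := by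
  simp only [Tfac, finsetSum_coeff, coeff_C_mul, coeff_X_pow, mul_ite, mul_one, mul_zero,
    Finset.sum_ite_eq, Finset.mem_range, Order.lt_add_one_iff]
  split_ifs with hj
  · rfl
  · rw [coeff_eq_zero_of_natDegree_lt (by simpa using hj), zero_div]

theorem map_Tfac (q : ℝ[X]) : (Tfac q).map (algebraMap ℝ ℂ) =
    (q.natDegree ! : ℂ)⁻¹ • aeval 𝒟 (q.map (algebraMap ℝ ℂ)).reverse (X ^ q.natDegree) := by
  ext j
  rw [coeff_smul, ← natDegree_map (algebraMap ℝ ℂ), coeff_aeval_derivative_reverse_X_pow,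
    coeff_map, coeff_map, coeff_Tfac, smul_eq_mul, inv_mul_cancel_left₀]
  · simp
  · exact Nat.cast_ne_zero.mpr (Nat.factorial_ne_zero _)

theorem AllRealRoots.Tfac {q : ℝ[X]} (hq : AllRealRoots q) : AllRealRoots (Tfac q) := by
  unfold AllRealRoots
  rw [map_Tfac]
  exact ((isRealRooted_X_pow _).aeval_derivative_reverse hq).smul
    (inv_ne_zero (Nat.cast_ne_zero.mpr (Nat.factorial_ne_zero _)))

theorem AllRealRoots.comp_one_sub_X {p : ℝ[X]} (hp : AllRealRoots p) :
    AllRealRoots (p.comp (1 - X)) := by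
  intro z hz
  simpa using hp (1 - z) (by simpa [map_comp] using hz)

theorem coeff_one_sub_X_pow {R : Type*} [CommRing R] (m j : ℕ) :
    (((1 : R[X]) - X) ^ m).coeff j = (-1 : R) ^ j * m.choose j := by
  have : ((1 : R[X]) - X) ^ m = ((1 + X) ^ m).comp (C (-1) * X) := by
    simp [sub_eq_add_neg]
  rw [this, comp_C_mul_X_coeff, coeff_one_add_X_pow, mul_comm]

theorem coeff_laguerre (m j : ℕ) : (laguerre m).coeff j = (-1) ^ j * m.choose j / j ! := by
  simp only [laguerre, finsetSum_coeff, coeff_C_mul, coeff_X_pow, mul_ite, mul_one, mul_zero,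
    Finset.sum_ite_eq, Finset.mem_range, Order.lt_add_one_iff]
  split_ifs with hj
  · rfl
  · rw [Nat.choose_eq_zero_of_lt (by simpa using hj)]
    simp

theorem Phi_eq_Tfac_comp (p : ℝ[X]) : Phi p = Tfac (p.comp (1 - X)) := by
  ext j
  rw [coeff_Tfac, comp_eq_sum_left, sum_over_range _ (by simp), Phi, finsetSum_coeff,
    finsetSum_coeff, Finset.sum_div]
  simp only [coeff_C_mul, coeff_laguerre, coeff_one_sub_X_pow, mul_div_assoc]

theorem stmt_4 (p : ℝ[X]) (hp : AllRealRoots p) : AllRealRoots (Phi p) := by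
  rw [Phi_eq_Tfac_comp]
  exact hp.comp_one_sub_X.Tfac
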